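/- Let W be an irreducible finite-dimensional gl_N-module. The module T(W,γ,h) is reducible as a 𝒟_0-module if and only if it is reducible as a 𝒱_N-module and h = 0. -/

import Mathlib

noncomputable section

/-- The space `q^γ ℂ[q_1^{±1},…,q_N^{±1}] ⊗ W ⊗ ℂv_h`. -/
abbrev TM (N : ℕ) (W : Type*) [AddCommGroup W] [Module ℂ W] : Type _ :=
  (Fin N → ℤ) →₀ W

/-- The action of `t^r d_a` (`a = 1,…,N`) on the tensor module. -/
noncomputable def tact {N : ℕ} {W : Type*} [AddCommGroup W] [Module ℂ W]
    (ρ : Fin N → Fin N → Module.End ℂ W) (γ : Fin N → ℂ)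
    (r : Fin N → ℤ) (a : Fin N) : Module.End ℂ (TM N W) :=
  Finsupp.lsum ℂ fun μ => (Finsupp.lsingle (μ + r) : W →ₗ[ℂ] TM N W) ∘ₗ
    ((γ a + (μ a : ℂ)) • (LinearMap.id : W →ₗ[ℂ] W) + ∑ p : Fin N, (r p : ℂ) • ρ p a)

/-- The family of operators `ρ p a` is a representation of `gl_N`. -/
def IsGLRep {N : ℕ} {W : Type*} [AddCommGroup W] [Module ℂ W]
    (ρ : Fin N → Fin N → Module.End ℂ W) : Prop :=
  ∀ p a b c, ⁅ρ p a, ρ b c⁆ =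
    (if a = b then ρ p c else 0) - (if c = p then ρ b a else 0)

/-- The shift operator `q^μ ⊗ w ↦ q^{μ+m} ⊗ w` on the tensor module. -/
noncomputable def shOp {N : ℕ} {W : Type*} [AddCommGroup W] [Module ℂ W]
    (m : Fin N → ℤ) : Module.End ℂ (TM N W) :=
  Finsupp.lmapDomain W ℂ (· + m)

/-- The Casimir operator of `sl_N` acting on `W` (with respect to the trace form):
`Σ_{i,j} ρ(Ẽ^{ij}) ρ(Ẽ^{ji})` where `Ẽ^{ij} = E^{ij} − δ_{ij} I/N`. -/
noncomputable def casOp {N : ℕ} {W : Type*} [AddCommGroup W] [Module ℂ W]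
    (ρ : Fin N → Fin N → Module.End ℂ W) : Module.End ℂ W :=
  ∑ i : Fin N, ∑ j : Fin N,
    (ρ i j - if i = j then ((N : ℂ))⁻¹ • ∑ c : Fin N, ρ c c else 0) ∘ₗ
    (ρ j i - if j = i then ((N : ℂ))⁻¹ • ∑ c : Fin N, ρ c c else 0)

/-!
A submodule `P` of the tensor module that is stable under all `t^r d_a` is graded, since the
`t^0 d_a` act on degree `μ` by the distinct scalars `γ_a + μ_a`. Transporting `w` from degree
`μ` to degree `ν` in two steps `t^{ν-μ-s} d_a ∘ t^s d_b` and taking the second difference in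
`s` at `e_a, e_b` leaves an operator quadratic in the `E^{pq}`; summed over `a, b` it is the
scalar `Nα − α² + α − Ω − α²/N = 2(N+1)(β + h)`, computed from `Σ E^{cc} = α` and the
Casimir. So if `β + h ≠ 0`, then `P` contains `q^ν ⊗ w` as soon as it contains `q^μ ⊗ w`; its
degree-`0` slice is then a `gl_N`-submodule of `W`, and irreducibility of `W` makes `P` trivial.
Hence a reducible tensor module has `β = −h`, and `t^r d_0` acts by `−h` times a shift, which
for `h ≠ 0` moves vectors freely between degrees in the same way.
-/

lemma affine_mul_affine_polarization {R G : Type*} [Ring R] [AddCommGroup G]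
    (f g : G →+ R) (L M : R) (s t : G) :
    (L + f (s + t)) * (M + g (s + t)) - (L + f s) * (M + g s) - (L + f t) * (M + g t)
        + (L + f 0) * (M + g 0) = f s * g t + f t * g s := by
  simp only [map_add, map_zero]
  noncomm_ring

section TensorModule

variable {N : ℕ} {W : Type*} [AddCommGroup W] [Module ℂ W]
  (ρ : Fin N → Fin N → Module.End ℂ W) (γ : Fin N → ℂ)

def rhoComb (a : Fin N) : (Fin N → ℤ) →+ Module.End ℂ W :=
  AddMonoidHom.mk' (fun r => ∑ p, (r p : ℂ) • ρ p a) fun r s => by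
    simp only [Pi.add_apply, Int.cast_add, add_smul, Finset.sum_add_distrib]

def tactCoeff (μ r : Fin N → ℤ) (a : Fin N) : Module.End ℂ W :=
  (γ a + (μ a : ℂ)) • 1 + rhoComb ρ a r

def IsTactInvariant (P : Submodule ℂ (TM N W)) : Prop :=
  ∀ r a, ∀ v ∈ P, tact ρ γ r a v ∈ P

lemma rhoComb_single (a p : Fin N) : rhoComb ρ a (Pi.single p 1) = ρ p a := by
  simp [rhoComb, Pi.single_apply]

lemma tact_single (r : Fin N → ℤ) (a : Fin N) (μ : Fin N → ℤ) (w : W) :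
    tact ρ γ r a (Finsupp.single μ w) = Finsupp.single (μ + r) (tactCoeff ρ γ μ r a w) := by
  simp [tact, tactCoeff, rhoComb, Finsupp.lsum_single]

lemma tact_zero_apply (a : Fin N) (v : TM N W) (κ : Fin N → ℤ) :
    tact ρ γ 0 a v κ = (γ a + (κ a : ℂ)) • v κ := by
  induction v using Finsupp.induction_linear with
  | zero => simp
  | add f g hf hg => simp only [map_add, Finsupp.add_apply, hf, hg, smul_add]
  | single μ w =>
    rw [tact_single, add_zero, Finsupp.single_apply, Finsupp.single_apply]
    split_ifs with hμ
    · simp [hμ, tactCoeff]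
    · rw [smul_zero]

lemma shOp_single (m μ : Fin N → ℤ) (w : W) :
    shOp m (Finsupp.single μ w) = Finsupp.single (μ + m) w := by
  simp [shOp, Finsupp.mapDomain_single]

lemma tactCoeff_mul_tactCoeff_polarization (μ ν : Fin N → ℤ) (a b : Fin N) :
    let T s := tactCoeff ρ γ (μ + s) (ν - μ - s) a * tactCoeff ρ γ μ s b
    T (Pi.single a 1 + Pi.single b 1) - T (Pi.single a 1) - T (Pi.single b 1) + T 0
      = (1 - ρ a a) * ρ b b + ((if a = b then 1 else 0) - ρ b a) * ρ a b := by
  let f : (Fin N → ℤ) →+ Module.End ℂ W :=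
    AddMonoidHom.mk' (fun s => (s a : ℂ) • 1 - rhoComb ρ a s) fun s t => by
      simp only [Pi.add_apply, Int.cast_add, add_smul, map_add]
      abel
  have hT : ∀ s, tactCoeff ρ γ (μ + s) (ν - μ - s) a * tactCoeff ρ γ μ s b
      = (((γ a + (μ a : ℂ)) • 1 + rhoComb ρ a (ν - μ)) + f s)
        * ((γ b + (μ b : ℂ)) • 1 + rhoComb ρ b s) := fun s => by
    congr 1
    simp only [tactCoeff, f, AddMonoidHom.mk'_apply, map_sub, Pi.add_apply, Int.cast_add,
      add_smul]
    abel
  simp only [hT]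
  rw [affine_mul_affine_polarization]
  simp [f, rhoComb_single, Pi.single_apply]

variable {ρ γ}

lemma sum_rho_mul_rho_eq_smul_one (hN : N ≠ 0) {α Ω : ℂ}
    (hα : (∑ c : Fin N, ρ c c) = α • 1) (hΩ : casOp ρ = Ω • 1) :
    ∑ i : Fin N, ∑ j : Fin N, ρ i j * ρ j i = (Ω + α ^ 2 / N) • 1 := by
  have hdiag : ∀ i j : Fin N,
      (ρ i j - if i = j then ((N : ℂ))⁻¹ • ∑ c : Fin N, ρ c c else 0) ∘ₗ
        (ρ j i - if j = i then ((N : ℂ))⁻¹ • ∑ c : Fin N, ρ c c else 0)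
      = ρ i j * ρ j i - if i = j then (2 * α / N) • ρ i i - (α / N) ^ 2 • 1 else 0 := by
    intro i j
    rcases eq_or_ne i j with rfl | hij
    · simp only [if_true, hα, ← Module.End.mul_eq_comp, smul_smul, sub_mul, mul_sub,
        mul_smul_comm, smul_mul_assoc, mul_one, one_mul]
      module
    · simp [hij, hij.symm, Module.End.mul_eq_comp]
  rw [casOp, Finset.sum_congr rfl fun i _ => Finset.sum_congr rfl fun j _ => hdiag i j] at hΩ
  simp only [Finset.sum_sub_distrib, Finset.sum_ite_eq, Finset.mem_univ, if_true,
    ← Finset.smul_sum, hα, Finset.sum_const, Finset.card_univ, Fintype.card_fin] at hΩ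
  rw [sub_eq_iff_eq_add.1 hΩ]
  match_scalars
  field_simp
  ring

lemma sum_polarization_eq_smul_one (hN : N ≠ 0) {α Ω : ℂ}
    (hα : (∑ c : Fin N, ρ c c) = α • 1) (hΩ : casOp ρ = Ω • 1) :
    ∑ a : Fin N, ∑ b : Fin N,
      ((1 - ρ a a) * ρ b b + ((if a = b then 1 else 0) - ρ b a) * ρ a b)
      = ((N : ℂ) * α - α ^ 2 + α - Ω - α ^ 2 / N) • 1 := by
  simp only [sub_mul, ite_mul, one_mul, zero_mul, Finset.sum_add_distrib, Finset.sum_sub_distrib,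
    Finset.sum_ite_eq, Finset.mem_univ, if_true, ← Finset.sum_mul, ← Finset.mul_sum, hα]
  rw [Finset.sum_comm, sum_rho_mul_rho_eq_smul_one hN hα hΩ]
  simp only [Finset.sum_const, Finset.card_univ, Fintype.card_fin, smul_mul_smul, one_mul]
  match_scalars
  ring

namespace IsTactInvariant

variable {P : Submodule ℂ (TM N W)}

lemma single_tactCoeff_mem (hP : IsTactInvariant ρ γ P) {μ : Fin N → ℤ} {w : W}
    (hw : Finsupp.single μ w ∈ P) (r : Fin N → ℤ) (a : Fin N) :
    Finsupp.single (μ + r) (tactCoeff ρ γ μ r a w) ∈ P := by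
  simpa only [tact_single] using hP r a _ hw

lemma single_apply_mem (hP : IsTactInvariant ρ γ P) {v : TM N W} (hv : v ∈ P)
    (μ : Fin N → ℤ) : Finsupp.single μ (v μ) ∈ P := by
  induction h : v.support.card using Nat.strong_induction_on generalizing v with
  | _ n ih =>
  by_cases hsupp : v.support ⊆ {μ}
  · rwa [← Finsupp.support_subset_singleton.1 hsupp]
  obtain ⟨ν, hν, hνμ⟩ := Finset.not_subset.1 hsupp
  obtain ⟨a, ha⟩ := Function.ne_iff.1 (Finset.notMem_singleton.1 hνμ)
  -- `t^0 d_a - (γ_a + ν_a)` kills the degree-`ν` component and rescales the others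
  set v' := tact ρ γ 0 a v - (γ a + (ν a : ℂ)) • v
  have hv' : ∀ κ, v' κ = ((κ a : ℂ) - ν a) • v κ := fun κ => by
    simp only [v', Finsupp.sub_apply, Finsupp.smul_apply, tact_zero_apply, ← sub_smul]
    congr 1
    ring
  have hsub : v'.support ⊆ v.support.erase ν := fun κ hκ => by
    rw [Finsupp.mem_support_iff, hv', smul_ne_zero_iff] at hκ
    exact Finset.mem_erase.2 ⟨by rintro rfl; simp at hκ, Finsupp.mem_support_iff.2 hκ.2⟩
  have hlt : v'.support.card < n :=
    h ▸ (Finset.card_le_card hsub).trans_lt (Finset.card_erase_lt_of_mem hν)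
  have hμa : ((μ a : ℂ) - ν a) ≠ 0 := sub_ne_zero.2 (by exact_mod_cast Ne.symm ha)
  have := ih _ hlt (P.sub_mem (hP 0 a v hv) (P.smul_mem _ hv)) rfl
  rwa [hv', ← Finsupp.smul_single, P.smul_mem_iff hμa] at this

lemma eq_bot_or_eq_top_of_forall_single_mem (hP : IsTactInvariant ρ γ P)
    (hirr : ∀ U : Submodule ℂ W, (∀ p a, ∀ w ∈ U, ρ p a w ∈ U) → U = ⊥ ∨ U = ⊤)
    (hmove : ∀ (μ ν : Fin N → ℤ) (w : W), Finsupp.single μ w ∈ P → Finsupp.single ν w ∈ P) :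
    P = ⊥ ∨ P = ⊤ := by
  set U := P.comap (Finsupp.lsingle 0)
  have hU : ∀ μ w, w ∈ U ↔ Finsupp.single μ w ∈ P := fun μ w => ⟨hmove 0 μ w, hmove μ 0 w⟩
  have hUinv : ∀ p a, ∀ w ∈ U, ρ p a w ∈ U := by
    intro p a w hw
    have h := (hU _ _).2 (hP.single_tactCoeff_mem ((hU 0 w).1 hw) (Pi.single p 1) a)
    have hcoeff : tactCoeff ρ γ 0 (Pi.single p 1) a w = γ a • w + ρ p a w := by
      simp [tactCoeff, rhoComb_single]
    rw [hcoeff] at h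
    simpa using U.sub_mem h (U.smul_mem (γ a) hw)
  rcases hirr U hUinv with hbot | htop
  · refine Or.inl ((Submodule.eq_bot_iff P).2 fun v hv => Finsupp.ext fun μ => ?_)
    simpa [hbot] using (hU μ (v μ)).2 (hP.single_apply_mem hv μ)
  · refine Or.inr (Submodule.eq_top_iff'.2 fun v => ?_)
    rw [← Finsupp.sum_single v]
    exact P.sum_mem fun μ _ => (hU μ _).1 (htop ▸ Submodule.mem_top)

lemma single_mem_of_single_mem (hP : IsTactInvariant ρ γ P) (hN : N ≠ 0) {α Ω : ℂ}
    (hα : (∑ c : Fin N, ρ c c) = α • 1) (hΩ : casOp ρ = Ω • 1)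
    (hS : (N : ℂ) * α - α ^ 2 + α - Ω - α ^ 2 / N ≠ 0) {μ : Fin N → ℤ} {w : W}
    (hw : Finsupp.single μ w ∈ P) (ν : Fin N → ℤ) : Finsupp.single ν w ∈ P := by
  set Q := P.comap (Finsupp.lsingle ν)
  have htwo : ∀ s a b,
      (tactCoeff ρ γ (μ + s) (ν - μ - s) a * tactCoeff ρ γ μ s b) w ∈ Q := fun s a b => by
    have h := hP.single_tactCoeff_mem (hP.single_tactCoeff_mem hw s b) (ν - μ - s) a
    rwa [add_add_sub_cancel, add_sub_cancel] at h
  have hpol : ∀ a b,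
      ((1 - ρ a a) * ρ b b + ((if a = b then 1 else 0) - ρ b a) * ρ a b) w ∈ Q := fun a b => by
    rw [← tactCoeff_mul_tactCoeff_polarization ρ γ μ ν a b]
    simp only [LinearMap.add_apply, LinearMap.sub_apply]
    exact Q.add_mem (Q.sub_mem (Q.sub_mem (htwo _ a b) (htwo _ a b)) (htwo _ a b)) (htwo _ a b)
  have hsum := Q.sum_mem (t := .univ) fun a _ => Q.sum_mem (t := .univ) fun b _ => hpol a b
  simp only [← LinearMap.sum_apply, sum_polarization_eq_smul_one hN hα hΩ] at hsum
  exact (Q.smul_mem_iff hS).1 hsum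

lemma casimir_relation_of_ne_bot_of_ne_top (hP : IsTactInvariant ρ γ P) (hN : N ≠ 0)
    (hirr : ∀ U : Submodule ℂ W, (∀ p a, ∀ w ∈ U, ρ p a w ∈ U) → U = ⊥ ∨ U = ⊤)
    {α Ω : ℂ} (hα : (∑ c : Fin N, ρ c c) = α • 1) (hΩ : casOp ρ = Ω • 1)
    (hbot : P ≠ ⊥) (htop : P ≠ ⊤) :
    Ω / (2 * (N + 1)) + α * (α - N) / (2 * N) = 0 := by
  have hN1 : (N : ℂ) + 1 ≠ 0 := by exact_mod_cast N.succ_ne_zero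
  have hS : (N : ℂ) * α - α ^ 2 + α - Ω - α ^ 2 / N
      = -(2 * (N + 1)) * (Ω / (2 * (N + 1)) + α * (α - N) / (2 * N)) := by
    field_simp
    ring
  by_contra hne
  have hS0 : (N : ℂ) * α - α ^ 2 + α - Ω - α ^ 2 / N ≠ 0 :=
    hS ▸ mul_ne_zero (neg_ne_zero.2 (mul_ne_zero two_ne_zero hN1)) hne
  exact (hP.eq_bot_or_eq_top_of_forall_single_mem hirr fun μ ν w hw =>
    hP.single_mem_of_single_mem hN hα hΩ hS0 hw ν).elim hbot htop

end IsTactInvariant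

end TensorModule

theorem stmt11_general {N : ℕ} (hN : 1 ≤ N) {W : Type*} [AddCommGroup W] [Module ℂ W]
    (ρ : Fin N → Fin N → Module.End ℂ W)
    (hirr : ∀ P : Submodule ℂ W, (∀ p a, ∀ w ∈ P, ρ p a w ∈ P) → P = ⊥ ∨ P = ⊤)
    (γ : Fin N → ℂ) (h α Ω : ℂ)
    (hα : (∑ c : Fin N, ρ c c) = α • 1)
    (hΩ : casOp ρ = Ω • 1) :
    (∃ P : Submodule ℂ (TM N W), P ≠ ⊥ ∧ P ≠ ⊤ ∧
        (∀ r a, ∀ v ∈ P, tact ρ γ r a v ∈ P) ∧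
        (∀ r : Fin N → ℤ, ∀ v ∈ P,
          ((-h - Ω / (2 * (N + 1)) - α * (α - N) / (2 * N)) • shOp r) v ∈ P)) ↔
      ((∃ P : Submodule ℂ (TM N W), P ≠ ⊥ ∧ P ≠ ⊤ ∧
        ∀ r a, ∀ v ∈ P, tact ρ γ r a v ∈ P) ∧ h = 0) := by
  have hβ : ∀ P : Submodule ℂ (TM N W), P ≠ ⊥ → P ≠ ⊤ → IsTactInvariant ρ γ P →
      -h - Ω / (2 * (N + 1)) - α * (α - N) / (2 * N) = -h := fun P hbot htop hP => by
    linear_combination -hP.casimir_relation_of_ne_bot_of_ne_top (by omega) hirr hα hΩ hbot htop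
  constructor
  · rintro ⟨P, hbot, htop, hP : IsTactInvariant ρ γ P, hshift⟩
    refine ⟨⟨P, hbot, htop, hP⟩, by_contra fun hh => ?_⟩
    rw [hβ P hbot htop hP] at hshift
    have hmove : ∀ μ ν (w : W), Finsupp.single μ w ∈ P → Finsupp.single ν w ∈ P :=
      fun μ ν w hw => by
        have := hshift (ν - μ) _ hw
        rwa [LinearMap.smul_apply, shOp_single, add_sub_cancel,
          P.smul_mem_iff (neg_ne_zero.2 hh)] at this
    exact (hP.eq_bot_or_eq_top_of_forall_single_mem hirr hmove).elim hbot htop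
  · rintro ⟨⟨P, hbot, htop, hP⟩, rfl⟩
    refine ⟨P, hbot, htop, hP, fun r v _ => ?_⟩
    rw [hβ P hbot htop hP, neg_zero, zero_smul]
    exact P.zero_mem

/-- let `W` be an irreducible finite-dimensional `gl_N`-module (with the
identity matrix acting by `α` and the Casimir operator of `sl_N` by `Ω`).  The module
`T(W,γ,h)` — on which `t^r d_a` (`a = 1,…,N`) acts by the tensor module action and
`t^r d_0` acts by `β`-shifts, `β = −h − Ω/(2(N+1)) − α(α−N)/(2N)` — is reducible as a
`𝒟_0`-module if and only if it is reducible as a `𝒱_N`-module and `h = 0`. -/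
theorem stmt11 {N : ℕ} (hN : 1 ≤ N) {W : Type*} [AddCommGroup W] [Module ℂ W]
    [FiniteDimensional ℂ W] [Nontrivial W]
    (ρ : Fin N → Fin N → Module.End ℂ W) (hρ : IsGLRep ρ)
    (hirr : ∀ P : Submodule ℂ W, (∀ p a, ∀ w ∈ P, ρ p a w ∈ P) → P = ⊥ ∨ P = ⊤)
    (γ : Fin N → ℂ) (h α Ω : ℂ)
    (hα : (∑ c : Fin N, ρ c c) = α • 1)
    (hΩ : casOp ρ = Ω • 1) :
    (∃ P : Submodule ℂ (TM N W), P ≠ ⊥ ∧ P ≠ ⊤ ∧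
        (∀ r a, ∀ v ∈ P, tact ρ γ r a v ∈ P) ∧
        (∀ r : Fin N → ℤ, ∀ v ∈ P,
          ((-h - Ω / (2 * (N + 1)) - α * (α - N) / (2 * N)) • shOp r) v ∈ P)) ↔
      ((∃ P : Submodule ℂ (TM N W), P ≠ ⊥ ∧ P ≠ ⊤ ∧
        ∀ r a, ∀ v ∈ P, tact ρ γ r a v ∈ P) ∧ h = 0) :=
  stmt11_general hN ρ hirr γ h α Ω hα hΩ

end
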